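/- arXiv:1806.01691 — 2 statements merged into one kernel-verified Lean document; each statement's English description precedes it below -/
import Mathlib

section
/- Let A be a commutative ring and let 𝔞 be a proper ideal of A contained in the Jacobson radical of A, such that the quotient ring A/𝔞 is an integral domain. Let L ∈ A be an element whose image in A/𝔞 is nonzero, let I be an ideal of A with I ⊆ (L) (the principal ideal generated by L), and let Ī denote the image of I in A/𝔞 under the quotient map. If the image of L in A/𝔞 lies in Ī, then I = (L). -/
/-- Skinner–Urban lifting lemma: if `𝔞` is a proper ideal contained in the Jacobson
radical of `A`, `A/𝔞` is a domain, `L` has nonzero image in `A/𝔞`, `I ⊆ (L)`, and the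
image of `L` in `A/𝔞` lies in the image `Ī` of `I`, then `I = (L)`. -/
theorem skinner_urban_lifting_lemma
    {A : Type*} [CommRing A] (𝔞 : Ideal A) (h𝔞ne : 𝔞 ≠ ⊤)
    (h𝔞 : 𝔞 ≤ (⊥ : Ideal A).jacobson)
    [IsDomain (A ⧸ 𝔞)]
    (L : A) (hL : Ideal.Quotient.mk 𝔞 L ≠ 0)
    (I : Ideal A) (hI : I ≤ Ideal.span {L})
    (hmem : Ideal.Quotient.mk 𝔞 L ∈ I.map (Ideal.Quotient.mk 𝔞)) :
    I = Ideal.span {L} := by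
  apply le_antisymm hI
  rw [Ideal.map_eq_submodule_map] at hmem
  obtain ⟨x, hxI, hx⟩ := hmem
  obtain ⟨c, hc⟩ := Ideal.mem_span_singleton'.mp (hI hxI)
  have hx' : Ideal.Quotient.mk 𝔞 x = Ideal.Quotient.mk 𝔞 L := hx
  have h1 : Ideal.Quotient.mk 𝔞 c = 1 := by
    have hmul : Ideal.Quotient.mk 𝔞 c * Ideal.Quotient.mk 𝔞 L = Ideal.Quotient.mk 𝔞 L := by
      rw [← map_mul, hc]; exact hx'
    exact mul_right_cancel₀ hL (hmul.trans (one_mul _).symm)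
  have hc1 : c - 1 ∈ (⊥ : Ideal A).jacobson := h𝔞 (by
    rw [← Ideal.Quotient.eq_zero_iff_mem, map_sub, h1, map_one, sub_self])
  have hunit : IsUnit c := by
    have := (Ideal.mem_jacobson_bot.mp hc1) 1
    simpa using this
  obtain ⟨u, hu⟩ := hunit
  rw [Ideal.span_singleton_le_iff_mem]
  have : L = (u⁻¹ : Aˣ) * x := by
    rw [← hc, ← hu, ← mul_assoc]
    simp
  rw [this]
  exact I.mul_mem_left _ hxI
end

section
/- Let R be a commutative integral domain and let A = R⟦X⟧ be the ring of formal power series over R. Let L ∈ A be a power series whose constant coefficient is nonzero, and let I be an ideal of A with I ⊆ (L). If the constant coefficient of L lies in the image of I under the constant-coefficient ring homomorphism A → R, then I = (L). -/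
/-!
If `φ L = φ f` with `f ∈ I ⊆ (L)`, write `f = g L`; cancelling `φ L ≠ 0` in the domain gives
`φ g = 1`, so `g` is a unit because `φ` reflects units (for `R⟦X⟧ → R`, a power series with unit
constant coefficient is invertible). Hence `L = g⁻¹ f ∈ I`.
-/

instance PowerSeries.isLocalHom_constantCoeff {R : Type*} [CommRing R] :
    IsLocalHom (PowerSeries.constantCoeff : PowerSeries R →+* R) :=
  ⟨fun _ h => PowerSeries.isUnit_iff_constantCoeff.mpr h⟩

theorem Ideal.eq_span_singleton_of_le_of_map_mem {A B : Type*} [CommRing A] [CommRing B]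
    [IsDomain B] (φ : A →+* B) [IsLocalHom φ] (hφ : Function.Surjective φ) {L : A}
    (hL : φ L ≠ 0) {I : Ideal A} (hI : I ≤ Ideal.span {L}) (hmem : φ L ∈ I.map φ) :
    I = Ideal.span {L} := by
  obtain ⟨f, hfI, hf⟩ := (Ideal.mem_map_iff_of_surjective φ hφ).mp hmem
  obtain ⟨g, rfl⟩ := Ideal.mem_span_singleton'.mp (hI hfI)
  have hg : φ g = 1 := mul_right_cancel₀ hL (by rw [← map_mul, hf, one_mul])
  have hg_unit : IsUnit g := isUnit_of_map_unit φ g (hg ▸ isUnit_one)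
  exact le_antisymm hI (I.span_singleton_le_iff_mem.mpr
    ((Ideal.unit_mul_mem_iff_mem I hg_unit).mp hfI))

/-- Instantiation of the Skinner–Urban lifting lemma for power series rings: if `R` is a
domain, `L ∈ R⟦X⟧` has nonzero constant coefficient, `I ⊆ (L)`, and the constant
coefficient of `L` lies in the image of `I` under the constant-coefficient map, then
`I = (L)`. -/
theorem skinner_urban_power_series
    {R : Type*} [CommRing R] [IsDomain R]
    (L : PowerSeries R) (hL : (PowerSeries.constantCoeff : PowerSeries R →+* R) L ≠ 0)
    (I : Ideal (PowerSeries R)) (hI : I ≤ Ideal.span {L})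
    (hmem : (PowerSeries.constantCoeff : PowerSeries R →+* R) L ∈ I.map (PowerSeries.constantCoeff : PowerSeries R →+* R)) :
    I = Ideal.span {L} :=
  Ideal.eq_span_singleton_of_le_of_map_mem _ PowerSeries.constantCoeff_surj hL hI hmem
end
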